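/- Let 𝔞_1 > 𝔞_2 > 𝔟_1 > 𝔟_2 be reals with pairwise integer differences, and let c be the multiset obtained as the disjoint union of the underlying multisets of the two linear segments (𝔞_1, …, 𝔟_1) and (𝔞_2, …, 𝔟_2) (so every value of the step-one grid between 𝔟_2 and 𝔞_1 occurs, with multiplicity 2 for values in [𝔟_1, 𝔞_2] and multiplicity 1 otherwise); set N = (𝔞_1 − 𝔟_1 + 1) + (𝔞_2 − 𝔟_2 + 1). Consider any finite list of linear segments S_1, …, S_t, with S_i = (α_i, …, β_i) where α_i ≥ β_i and α_i − β_i ∈ ℕ, such that the disjoint union of their underlying multisets equals c and the midpoints s_i = (α_i + β_i)/2 are weakly decreasing in i; let λ_S ∈ ℝ^N be the concatenation of the constant blocks of value s_i and length α_i − β_i + 1. Let λ′ ∈ ℝ^N be the Langlands parameter of the pair (𝔞_1, …, 𝔟_2), (𝔞_2, …, 𝔟_1), its two constant blocks ordered so that the larger (or equal) value comes first. Then λ′ ≤_P λ_S for every such list S: the total sums agree and Σ_{i=1}^{k} ((λ_S)_i − λ′_i) ≥ 0 for every 1 ≤ k ≤ N. In other words, λ′ is the minimal Langlands parameter among all parameters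 with this cuspidal support. -/

import Mathlib

/-- The underlying multiset of the linear segment `(α, α-1, …, α-k)`. -/
def segMultiset (α : ℝ) (k : ℕ) : Multiset ℝ :=
  (Multiset.range (k + 1)).map (fun j => α - j)

/-- The midpoint of the linear segment `(α, α-1, …, α-k)`. -/
noncomputable def segMid (α : ℝ) (k : ℕ) : ℝ := (α + (α - k)) / 2

/-- The Langlands-parameter block list of a list of linear segments: each segment
`(α, α-1, …, α-k)` contributes its midpoint repeated `k+1` times. -/
noncomputable def segBlocks (L : List (ℝ × ℕ)) : List ℝ :=
  L.flatMap (fun s => List.replicate (s.2 + 1) (segMid s.1 s.2))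

/-!
The parameter `λ_S` is weakly decreasing, so its prefix sums are concave, while those of `λ'`
are piecewise linear with a single break. It therefore suffices to compare prefix sums at the
break: some `k` entries of `λ_S` must sum to at least the first block of `λ'`, for
`k = d₁ + c + d₂ + 1` and for `k = c + 1`.

Merging two juxtaposed segments replaces their two blocks by one block carrying the weighted
mean, which can only lower such sums. Comparing the tops and bottoms of the segments shows that
a multisegment with the given support and no juxtaposed segments has only two segments, and is
then either the original pair or the pair (union, intersection); for these two the required
entries are exhibited directly.
-/

open Multiset in
theorem segMultiset_eq_map (α : ℝ) (k : ℕ) :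
    segMultiset α k = (range (k + 1)).map fun j : ℕ => α - j := by
  simp only [segMultiset, bind_pure_comp, Multiset.fmap_def, map_map]
  rfl

theorem segMultiset_append (α : ℝ) (k k' : ℕ) :
    segMultiset α (k + k' + 1) = segMultiset α k + segMultiset (α - k - 1) k' := by
  rw [segMultiset_eq_map, segMultiset_eq_map, segMultiset_eq_map,
    show k + k' + 1 + 1 = (k + 1) + (k' + 1) by omega, Multiset.range_add, Multiset.map_add,
    Multiset.map_map]
  congr 1
  refine Multiset.map_congr rfl fun j _ => ?_
  simp only [Function.comp_apply]
  push_cast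
  ring

theorem segMultiset_zero (α : ℝ) : segMultiset α 0 = {α} := by
  simp [segMultiset_eq_map]

theorem segMultiset_succ (α : ℝ) (k : ℕ) :
    segMultiset α (k + 1) = (α - (k + 1)) ::ₘ segMultiset α k := by
  rw [segMultiset_append α k 0, segMultiset_zero, add_comm, Multiset.singleton_add, sub_sub]

theorem map_add_one_segMultiset (α : ℝ) (k : ℕ) :
    (segMultiset α k).map (· + 1) = segMultiset (α + 1) k := by
  simp only [segMultiset_eq_map, Multiset.map_map]
  refine Multiset.map_congr rfl fun j _ => ?_
  simp only [Function.comp_apply]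
  ring

theorem card_segMultiset (α : ℝ) (k : ℕ) : Multiset.card (segMultiset α k) = k + 1 := by
  simp [segMultiset_eq_map]

theorem segMid_eq (α : ℝ) (k : ℕ) : segMid α k = α - k / 2 := by
  unfold segMid
  ring

theorem sum_segMultiset (α : ℝ) (k : ℕ) : (segMultiset α k).sum = (k + 1) * segMid α k := by
  induction k with
  | zero => simp [segMultiset_zero, segMid_eq]
  | succ k ih =>
    rw [segMultiset_succ, Multiset.sum_cons, ih, segMid_eq, segMid_eq]
    push_cast
    ring

theorem segMultiset_add_singleton (α : ℝ) (k : ℕ) :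
    segMultiset α k + {α + 1} = (segMultiset α k).map (· + 1) + {α - k} := by
  have h := segMultiset_append (α + 1) 0 k
  rw [zero_add, segMultiset_zero, segMultiset_succ, Nat.cast_zero, sub_zero,
    add_sub_cancel_right] at h
  rw [map_add_one_segMultiset, add_comm (segMultiset α k), ← h, add_sub_add_right_eq_sub,
    ← Multiset.singleton_add, add_comm {α - (k : ℝ)}]

def segSupport (L : List (ℝ × ℕ)) : Multiset ℝ := (L.map fun s => segMultiset s.1 s.2).sum

def segTops (L : List (ℝ × ℕ)) : Multiset ℝ := (L.map Prod.fst : List ℝ)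

def segBottoms (L : List (ℝ × ℕ)) : Multiset ℝ := (L.map fun s => s.1 - (s.2 : ℝ) : List ℝ)

def IsJuxtaposed (s t : ℝ × ℕ) : Prop := t.1 = s.1 - s.2 - 1

theorem segSupport_cons (s : ℝ × ℕ) (L : List (ℝ × ℕ)) :
    segSupport (s :: L) = segMultiset s.1 s.2 + segSupport L := by
  simp [segSupport]

theorem List.Perm.segSupport_eq {L L' : List (ℝ × ℕ)} (h : L.Perm L') :
    segSupport L = segSupport L' :=
  (h.map _).sum_eq

theorem segSupport_add_map_segTops (L : List (ℝ × ℕ)) :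
    segSupport L + (segTops L).map (· + 1) = (segSupport L).map (· + 1) + segBottoms L := by
  induction L with
  | nil => simp [segSupport, segTops, segBottoms]
  | cons s L ih =>
    simp only [segSupport_cons, segTops, segBottoms, List.map_cons, ← Multiset.cons_coe,
      Multiset.map_add, Multiset.map_singleton, ← Multiset.singleton_add] at ih ⊢
    rw [add_add_add_comm, segMultiset_add_singleton, ih, add_add_add_comm]

theorem segBottoms_add_map_segTops {L L' : List (ℝ × ℕ)} (h : segSupport L = segSupport L') :
    segBottoms L + (segTops L').map (· + 1) = segBottoms L' + (segTops L).map (· + 1) := by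
  have hL := segSupport_add_map_segTops L
  have hL' := segSupport_add_map_segTops L'
  rw [h] at hL
  apply add_left_cancel (a := (segSupport L').map (· + 1))
  rw [← add_assoc, ← hL, ← add_assoc, ← hL', add_right_comm, add_assoc]

/-- Without juxtaposed segments, every bottom of `L` is a bottom of `L'`. -/
theorem length_le_of_not_isJuxtaposed {L L' : List (ℝ × ℕ)} (h : segSupport L = segSupport L')
    (hL : ∀ s ∈ L, ∀ t ∈ L, ¬IsJuxtaposed s t) : L.length ≤ L'.length := by
  classical
  have hle : segBottoms L ≤ segBottoms L' := by
    rw [Multiset.le_iff_count]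
    intro x
    by_cases hx : x ∈ segBottoms L
    · have hx' : x ∉ (segTops L).map (· + 1) := by
        simp only [segBottoms, segTops, Multiset.mem_coe, List.mem_map, Multiset.map_coe] at hx ⊢
        rintro ⟨t, ⟨t, ht, rfl⟩, rfl⟩
        obtain ⟨s, hs, hst⟩ := hx
        exact hL s hs t ht (by unfold IsJuxtaposed; linarith)
      have := congrArg (Multiset.count x) (segBottoms_add_map_segTops h)
      rw [Multiset.count_add, Multiset.count_add, Multiset.count_eq_zero_of_notMem hx'] at this
      omega
    · rw [Multiset.count_eq_zero_of_notMem hx]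
      exact Nat.zero_le _
  simpa [segBottoms] using Multiset.card_le_card hle

theorem coe_segBlocks_cons (s : ℝ × ℕ) (L : List (ℝ × ℕ)) :
    (segBlocks (s :: L) : Multiset ℝ)
      = Multiset.replicate (s.2 + 1) (segMid s.1 s.2) + (segBlocks L : Multiset ℝ) := by
  rw [segBlocks, List.flatMap_cons, ← Multiset.coe_add, Multiset.coe_replicate, segBlocks]

theorem coe_segBlocks_eq_of_perm {L L' : List (ℝ × ℕ)} (h : L.Perm L') :
    (segBlocks L : Multiset ℝ) = segBlocks L' :=
  Multiset.coe_eq_coe.mpr (h.flatMap_right _)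

theorem length_segBlocks (L : List (ℝ × ℕ)) :
    (segBlocks L).length = Multiset.card (segSupport L) := by
  rw [← Multiset.coe_card]
  induction L with
  | nil => simp [segBlocks, segSupport]
  | cons s L ih =>
    simp only [coe_segBlocks_cons, segSupport_cons, Multiset.card_add, Multiset.card_replicate,
      card_segMultiset, ih]

theorem sum_segBlocks (L : List (ℝ × ℕ)) : (segBlocks L).sum = (segSupport L).sum := by
  rw [← Multiset.sum_coe]
  induction L with
  | nil => simp [segBlocks, segSupport]
  | cons s L ih =>
    simp only [coe_segBlocks_cons, segSupport_cons, Multiset.sum_add, Multiset.sum_replicate,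
      sum_segMultiset, nsmul_eq_mul, ih]
    push_cast
    ring

theorem pairwise_segBlocks {L : List (ℝ × ℕ)}
    (hL : L.IsChain fun s t => segMid t.1 t.2 ≤ segMid s.1 s.2) :
    (segBlocks L).Pairwise (· ≥ ·) := by
  let : Trans (fun s t : ℝ × ℕ => segMid t.1 t.2 ≤ segMid s.1 s.2)
      (fun s t : ℝ × ℕ => segMid t.1 t.2 ≤ segMid s.1 s.2)
      (fun s t : ℝ × ℕ => segMid t.1 t.2 ≤ segMid s.1 s.2) := ⟨fun hab hbc => hbc.trans hab⟩
  refine List.pairwise_flatMap.mpr ⟨fun _ _ => List.pairwise_replicate.mpr (Or.inr le_rfl),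
    hL.pairwise.imp fun hst _ hx _ hy => ?_⟩
  rw [List.eq_of_mem_replicate hx, List.eq_of_mem_replicate hy]
  exact hst

def HasSubmultisetSumGE (M : Multiset ℝ) (k : ℕ) (T : ℝ) : Prop :=
  ∃ u ≤ M, Multiset.card u = k ∧ T ≤ u.sum

theorem HasSubmultisetSumGE.of_replicate_add {v v₁ v₂ : ℝ} {p q k : ℕ} {T : ℝ}
    {B : Multiset ℝ} (h₂ : v₂ ≤ v) (h₁ : v ≤ v₁) (hv : ((p + q : ℕ) : ℝ) * v = p * v₁ + q * v₂)
    (h : HasSubmultisetSumGE (Multiset.replicate (p + q) v + B) k T) :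
    HasSubmultisetSumGE (Multiset.replicate p v₁ + Multiset.replicate q v₂ + B) k T := by
  classical
  obtain ⟨u, hu, rfl, hT⟩ := h
  set R := Multiset.replicate (p + q) v
  obtain ⟨w, hw, hwu⟩ := Multiset.le_replicate_iff.mp (Multiset.inter_le_right (s := u) (t := R))
  have hrest : u - R ≤ B := Multiset.sub_le_iff_le_add'.mpr hu
  have hsplit : u = u - R + Multiset.replicate w v := by rw [← hwu, Multiset.sub_add_inter]
  -- The `w` copies of `v` in `u` become as many copies of `v₁` as possible, then copies of `v₂`.
  have hmean : (w : ℝ) * v ≤ (min w p : ℕ) * v₁ + (w - min w p : ℕ) * v₂ := by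
    rcases le_total w p with hwp | hpw
    · rw [min_eq_left hwp, Nat.sub_self, Nat.cast_zero, zero_mul, add_zero]
      exact mul_le_mul_of_nonneg_left h₁ w.cast_nonneg
    · rw [min_eq_right hpw, Nat.cast_sub hpw]
      have hq : (w : ℝ) ≤ p + q := by exact_mod_cast hw
      push_cast at hv
      nlinarith [mul_nonneg (sub_nonneg.mpr hq) (sub_nonneg.mpr h₂)]
  refine ⟨Multiset.replicate (min w p) v₁ + Multiset.replicate (w - min w p) v₂ + (u - R),
    add_le_add (add_le_add (Multiset.replicate_mono _ (min_le_right _ _))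
      (Multiset.replicate_mono _ (by omega))) hrest, ?_, ?_⟩
  · conv_rhs => rw [hsplit]
    simp only [Multiset.card_add, Multiset.card_replicate]
    omega
  · refine hT.trans ?_
    conv_lhs => rw [hsplit]
    simp only [Multiset.sum_add, Multiset.sum_replicate, nsmul_eq_mul]
    linarith

theorem segSupport_merge {s t : ℝ × ℕ} (hst : IsJuxtaposed s t) (R : List (ℝ × ℕ)) :
    segSupport ((s.1, s.2 + t.2 + 1) :: R) = segSupport (s :: t :: R) := by
  rw [IsJuxtaposed] at hst
  rw [segSupport_cons, segSupport_cons, segSupport_cons, segMultiset_append, ← add_assoc, hst]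

theorem HasSubmultisetSumGE.of_isJuxtaposed {s t : ℝ × ℕ} (hst : IsJuxtaposed s t)
    {R : List (ℝ × ℕ)} {k : ℕ} {T : ℝ}
    (h : HasSubmultisetSumGE (segBlocks ((s.1, s.2 + t.2 + 1) :: R)) k T) :
    HasSubmultisetSumGE (segBlocks (s :: t :: R)) k T := by
  rw [coe_segBlocks_cons, show s.2 + t.2 + 1 + 1 = (s.2 + 1) + (t.2 + 1) by omega] at h
  rw [coe_segBlocks_cons, coe_segBlocks_cons, ← add_assoc]
  rw [IsJuxtaposed] at hst
  refine h.of_replicate_add ?_ ?_ ?_ <;> simp only [segMid_eq, hst] <;> push_cast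
  · linarith
  · linarith [(t.2.cast_nonneg : (0 : ℝ) ≤ t.2)]
  · ring

theorem List.exists_perm_cons_cons {α : Type*} [DecidableEq α] {a b : α} {l : List α}
    (ha : a ∈ l) (hb : b ∈ l) (hab : a ≠ b) : ∃ r, l.Perm (a :: b :: r) :=
  ⟨(l.erase a).erase b, (List.perm_cons_erase ha).trans
    ((List.perm_cons_erase ((List.mem_erase_of_ne hab.symm).mpr hb)).cons a)⟩

/-- Merge juxtaposed segments, which can only lower the sums of the largest blocks, until none
are left; then `L` has at most as many segments as `L₀`. -/
theorem hasSubmultisetSumGE_segBlocks {L₀ : List (ℝ × ℕ)} {k : ℕ} {T : ℝ}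
    (hbase : ∀ L, segSupport L = segSupport L₀ → L.length ≤ L₀.length →
      HasSubmultisetSumGE (segBlocks L) k T)
    (L : List (ℝ × ℕ)) (hL : segSupport L = segSupport L₀) :
    HasSubmultisetSumGE (segBlocks L) k T := by
  classical
  induction hn : L.length using Nat.strong_induction_on generalizing L with
  | _ n ih =>
  by_cases hj : ∃ s ∈ L, ∃ t ∈ L, IsJuxtaposed s t
  · obtain ⟨s, hs, t, ht, hst⟩ := hj
    have hne : s ≠ t := by
      rintro rfl
      rw [IsJuxtaposed] at hst
      linarith [(s.2.cast_nonneg : (0 : ℝ) ≤ s.2)]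
    obtain ⟨R, hR⟩ := List.exists_perm_cons_cons hs ht hne
    rw [coe_segBlocks_eq_of_perm hR]
    refine HasSubmultisetSumGE.of_isJuxtaposed hst (ih _ ?_ _ ?_ rfl)
    · simp [← hn, hR.length_eq]
    · rw [segSupport_merge hst, ← hR.segSupport_eq, hL]
  · simp only [not_exists, not_and] at hj
    exact hbase L hL (length_le_of_not_isJuxtaposed hL hj)

theorem coe_segBlocks_pair (s t : ℝ × ℕ) :
    (segBlocks [s, t] : Multiset ℝ)
      = Multiset.replicate (s.2 + 1) (segMid s.1 s.2)
        + Multiset.replicate (t.2 + 1) (segMid t.1 t.2) := by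
  rw [coe_segBlocks_cons, coe_segBlocks_cons]
  simp [segBlocks]

section LinkedPair

variable {a₁ b₁ a₂ b₂ : ℝ} {d₁ d₂ c : ℕ}

theorem eq_of_fst_eq_of_sub_eq {s : ℝ × ℕ} {α : ℝ} {n : ℕ} (htop : s.1 = α)
    (hbot : s.1 - s.2 = α - n) : s = (α, n) :=
  Prod.ext htop (by exact_mod_cast (show (s.2 : ℝ) = n by linarith))

theorem exists_tops_bottoms_of_linked (h₁ : a₁ = a₂ + d₁) {L : List (ℝ × ℕ)}
    (hL : segSupport L = segSupport [(a₁, d₁ + c), (a₂, c + d₂)]) :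
    (∀ α, α = a₁ ∨ α = a₂ → ∃ s ∈ L, s.1 = α) ∧
      ∀ β, β = a₁ - ↑(d₁ + c) ∨ β = a₂ - ↑(c + d₂) → ∃ s ∈ L, s.1 - s.2 = β := by
  have hd₁ : (0 : ℝ) ≤ d₁ := d₁.cast_nonneg
  have hd₂ : (0 : ℝ) ≤ d₂ := d₂.cast_nonneg
  have hc : (0 : ℝ) ≤ c := c.cast_nonneg
  have hmem := fun x => congrArg (x ∈ ·) (segBottoms_add_map_segTops hL)
  simp only [segBottoms, segTops, Multiset.map_coe, Multiset.mem_add, Multiset.mem_coe,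
    List.map_cons, List.map_nil, List.mem_cons, List.not_mem_nil, List.mem_map, eq_iff_iff,
    or_false, exists_exists_and_eq_and] at hmem
  constructor
  · intro α hα
    rcases (hmem (α + 1)).mp (Or.inr (by rcases hα with rfl | rfl <;> simp)) with
      (h | h) | ⟨s, hs, hs1⟩
    · push_cast at h
      rcases hα with rfl | rfl <;> linarith
    · push_cast at h
      rcases hα with rfl | rfl <;> linarith
    · exact ⟨s, hs, by linarith⟩
  · intro β hβ
    rcases (hmem β).mpr (Or.inl hβ) with h | h | h
    · exact h
    · push_cast at hβ
      rcases hβ with rfl | rfl <;> linarith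
    · push_cast at hβ
      rcases hβ with rfl | rfl <;> linarith

theorem perm_of_segSupport_eq_linked (hd₁ : 1 ≤ d₁) (hd₂ : 1 ≤ d₂)
    (h₁ : a₁ = a₂ + d₁) {L : List (ℝ × ℕ)}
    (hL : segSupport L = segSupport [(a₁, d₁ + c), (a₂, c + d₂)]) (hlen : L.length ≤ 2) :
    L.Perm [(a₁, d₁ + c), (a₂, c + d₂)] ∨ L.Perm [(a₁, d₁ + c + d₂), (a₂, c)] := by
  classical
  have hd₁' : (1 : ℝ) ≤ d₁ := by exact_mod_cast hd₁
  have hd₂' : (1 : ℝ) ≤ d₂ := by exact_mod_cast hd₂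
  obtain ⟨htop, hbot⟩ := exists_tops_bottoms_of_linked h₁ hL
  obtain ⟨s, hs, hs1⟩ := htop a₁ (Or.inl rfl)
  obtain ⟨t, ht, ht1⟩ := htop a₂ (Or.inr rfl)
  obtain ⟨R, hR⟩ := List.exists_perm_cons_cons hs ht fun h => by
    rw [h, ht1] at hs1
    linarith
  obtain rfl : R = [] := by simpa [hR.length_eq] using hlen
  have hbot' : ∀ β, β = a₁ - ↑(d₁ + c) ∨ β = a₂ - ↑(c + d₂) →
      s.1 - s.2 = β ∨ t.1 - t.2 = β := by
    intro β hβ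
    obtain ⟨u, hu, hβu⟩ := hbot β hβ
    rcases List.mem_pair.mp (hR.mem_iff.mp hu) with rfl | rfl
    exacts [Or.inl hβu, Or.inr hβu]
  rcases hbot' _ (Or.inl rfl) with hsb | htb <;> rcases hbot' _ (Or.inr rfl) with hsb' | htb'
  · push_cast at hsb hsb'
    linarith
  · left
    rwa [eq_of_fst_eq_of_sub_eq hs1 hsb, eq_of_fst_eq_of_sub_eq ht1 htb'] at hR
  · right
    rwa [eq_of_fst_eq_of_sub_eq (n := d₁ + c + d₂) hs1 (by push_cast at hsb' ⊢; linarith),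
      eq_of_fst_eq_of_sub_eq (n := c) ht1 (by push_cast at htb ⊢; linarith)] at hR
  · push_cast at htb htb'
    linarith

theorem hasSubmultisetSumGE_of_linked (hd₁ : 1 ≤ d₁) (hd₂ : 1 ≤ d₂) (h₁ : a₁ = a₂ + d₁)
    {k : ℕ} {T : ℝ}
    (horig : HasSubmultisetSumGE (segBlocks [(a₁, d₁ + c), (a₂, c + d₂)]) k T)
    (hui : HasSubmultisetSumGE (segBlocks [(a₁, d₁ + c + d₂), (a₂, c)]) k T)
    {L : List (ℝ × ℕ)} (hL : segSupport L = segSupport [(a₁, d₁ + c), (a₂, c + d₂)]) :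
    HasSubmultisetSumGE (segBlocks L) k T := by
  refine hasSubmultisetSumGE_segBlocks (fun L' hL' hlen => ?_) L hL
  rcases perm_of_segSupport_eq_linked hd₁ hd₂ h₁ hL' hlen with h | h <;>
    rw [coe_segBlocks_eq_of_perm h]
  exacts [horig, hui]

theorem hasSubmultisetSumGE_union (hd₁ : 1 ≤ d₁) (hd₂ : 1 ≤ d₂)
    (h₁ : a₁ = a₂ + d₁) (h₂ : a₂ = b₁ + c) (h₃ : b₁ = b₂ + d₂) {L : List (ℝ × ℕ)}
    (hL : segSupport L = segSupport [(a₁, d₁ + c), (a₂, c + d₂)]) :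
    HasSubmultisetSumGE (segBlocks L) (d₁ + c + d₂ + 1)
      ((d₁ + c + d₂ + 1 : ℕ) * ((a₁ + b₂) / 2)) := by
  subst h₁ h₂ h₃
  refine hasSubmultisetSumGE_of_linked hd₁ hd₂ rfl ?_ ?_ hL <;> rw [coe_segBlocks_pair]
  · refine ⟨Multiset.replicate (d₁ + c + 1) (segMid (b₂ + d₂ + c + d₁) (d₁ + c))
      + Multiset.replicate d₂ (segMid (b₂ + d₂ + c) (c + d₂)),
      add_le_add le_rfl (Multiset.replicate_mono _ (by omega)),
      by simp only [Multiset.card_add, Multiset.card_replicate]; omega, ?_⟩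
    simp only [Multiset.sum_add, Multiset.sum_replicate, nsmul_eq_mul, segMid_eq]
    push_cast
    nlinarith [mul_nonneg (d₂.cast_nonneg : (0 : ℝ) ≤ d₂) (c.cast_nonneg : (0 : ℝ) ≤ c)]
  · refine ⟨_, le_self_add, Multiset.card_replicate _ _, le_of_eq ?_⟩
    rw [Multiset.sum_replicate, nsmul_eq_mul, segMid_eq]
    push_cast
    ring

theorem hasSubmultisetSumGE_intersection (hd₁ : 1 ≤ d₁) (hd₂ : 1 ≤ d₂)
    (h₁ : a₁ = a₂ + d₁) (h₂ : a₂ = b₁ + c) {L : List (ℝ × ℕ)}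
    (hL : segSupport L = segSupport [(a₁, d₁ + c), (a₂, c + d₂)]) :
    HasSubmultisetSumGE (segBlocks L) (c + 1) ((c + 1 : ℕ) * ((a₂ + b₁) / 2)) := by
  subst h₁ h₂
  refine hasSubmultisetSumGE_of_linked hd₁ hd₂ rfl ?_ ?_ hL <;> rw [coe_segBlocks_pair]
  · refine ⟨Multiset.replicate (c + 1) (segMid (b₁ + c + d₁) (d₁ + c)),
      (Multiset.replicate_mono _ (by omega)).trans le_self_add, Multiset.card_replicate _ _, ?_⟩
    rw [Multiset.sum_replicate, nsmul_eq_mul, segMid_eq]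
    push_cast
    nlinarith [mul_nonneg (c.cast_nonneg : (0 : ℝ) ≤ c) (d₁.cast_nonneg : (0 : ℝ) ≤ d₁)]
  · refine ⟨_, le_add_self, Multiset.card_replicate _ _, le_of_eq ?_⟩
    rw [Multiset.sum_replicate, nsmul_eq_mul, segMid_eq]
    push_cast
    ring

end LinkedPair

open Finset in
theorem Fin.sum_Iic_eq_sum_range {N : ℕ} (k : Fin N) (f : ℕ → ℝ) :
    ∑ i ∈ Iic k, f i = ∑ j ∈ range (k + 1), f j := by
  rw [Nat.range_succ_eq_Iic, ← Fin.map_valEmbedding_Iic, sum_map]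
  rfl

theorem List.sum_take_eq_sum_range_getD (l : List ℝ) (r : ℕ) :
    (l.take r).sum = ∑ j ∈ Finset.range r, l.getD j 0 := by
  induction l generalizing r with
  | nil => simp
  | cons a l ih =>
    cases r with
    | zero => simp
    | succ r => simp [Finset.sum_range_succ', ih, add_comm]

theorem List.Pairwise.antitoneOn_getD {l : List ℝ} (hl : l.Pairwise (· ≥ ·)) :
    AntitoneOn (fun j => l.getD j 0) (Set.Iio l.length) := by
  intro i hi j hj hij
  simp only [Set.mem_Iio] at hi hj
  simp only [List.getD_eq_getElem _ _ hi, List.getD_eq_getElem _ _ hj]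
  rcases hij.lt_or_eq with hij | rfl
  · exact List.pairwise_iff_getElem.mp hl i j hi hj hij
  · exact le_rfl

theorem List.Pairwise.sum_le_sum_take {l : List ℝ} (hl : l.Pairwise (· ≥ ·)) {u : Multiset ℝ}
    (hu : u ≤ l) : u.sum ≤ (l.take (Multiset.card u)).sum := by
  induction l generalizing u with
  | nil => simp [Multiset.le_zero.mp hu]
  | cons a l ih =>
    rw [List.pairwise_cons] at hl
    rw [← Multiset.cons_coe] at hu
    by_cases ha : a ∈ u
    · obtain ⟨u, rfl⟩ := Multiset.exists_cons_of_mem ha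
      rw [Multiset.card_cons, List.take_succ_cons, List.sum_cons, Multiset.sum_cons]
      linarith [ih hl.2 ((Multiset.cons_le_cons_iff a).mp hu)]
    · have hu' := (Multiset.le_cons_of_notMem ha).mp hu
      refine (ih hl.2 hu').trans ?_
      have hcard : Multiset.card u ≤ l.length := by simpa using Multiset.card_le_card hu'
      cases hn : Multiset.card u with
      | zero => simp
      | succ m =>
        rw [hn] at hcard
        rw [List.sum_take_succ _ _ hcard, List.take_succ_cons, List.sum_cons]
        linarith [hl.1 _ (List.getElem_mem hcard)]

open Finset in
/-- Concavity of the prefix sums of a weakly decreasing sequence. -/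
theorem mul_sum_Ico_le_mul_sum_Ico {f : ℕ → ℝ} {i j k : ℕ} (hf : AntitoneOn f (Set.Iio k)) :
    ((j - i : ℕ) : ℝ) * ∑ b ∈ Ico j k, f b ≤ ((k - j : ℕ) : ℝ) * ∑ a ∈ Ico i j, f a := by
  calc ((j - i : ℕ) : ℝ) * ∑ b ∈ Ico j k, f b = ∑ _a ∈ Ico i j, ∑ b ∈ Ico j k, f b := by
        rw [sum_const, Nat.card_Ico, nsmul_eq_mul]
    _ ≤ ∑ a ∈ Ico i j, ∑ _b ∈ Ico j k, f a := by
        refine sum_le_sum fun a ha => sum_le_sum fun b hb => ?_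
        simp only [mem_Ico] at ha hb
        exact hf (by simp only [Set.mem_Iio]; omega) (by simpa using hb.2) (by omega)
    _ = ((k - j : ℕ) : ℝ) * ∑ a ∈ Ico i j, f a := by
        simp only [sum_const, Nat.card_Ico, nsmul_eq_mul, mul_sum]

open Finset in
theorem sum_range_ite_of_le {p r : ℕ} (hpr : p ≤ r) (x y : ℝ) :
    ∑ j ∈ range r, (if j < p then x else y) = p * x + ((r - p : ℕ) : ℝ) * y := by
  rw [← sum_range_add_sum_Ico _ hpr,
    sum_congr rfl fun j hj => if_pos (mem_range.mp hj),
    sum_congr rfl fun j hj => if_neg (not_lt.mpr (mem_Ico.mp hj).1)]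
  simp

open Finset in
/-- A concave function (the prefix sums of a decreasing sequence) lying above a two-piece
linear function at its three breakpoints `0`, `p`, `p + q` lies above it everywhere. -/
theorem sum_range_ite_le_sum_range {f : ℕ → ℝ} {p q : ℕ} (hf : AntitoneOn f (Set.Iio (p + q)))
    {x y : ℝ} (htot : ∑ j ∈ range (p + q), f j = p * x + q * y)
    (hpre : p * x ≤ ∑ j ∈ range p, f j) {r : ℕ} (hr : r ≤ p + q) :
    ∑ j ∈ range r, (if j < p then x else y) ≤ ∑ j ∈ range r, f j := by
  rcases le_total r p with hrp | hpr
  · obtain ⟨m, rfl⟩ := Nat.exists_eq_add_of_le hrp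
    have hconc := mul_sum_Ico_le_mul_sum_Ico (i := 0) (j := r) (k := r + m)
      (hf.mono (Set.Iio_subset_Iio (by omega)))
    rw [← range_eq_Ico, Nat.sub_zero, Nat.add_sub_cancel_left] at hconc
    rw [← sum_range_add_sum_Ico _ (Nat.le_add_right r m)] at hpre
    rw [sum_congr rfl fun j hj => if_pos (by simp at hj; omega), sum_const, card_range,
      nsmul_eq_mul]
    rcases Nat.eq_zero_or_pos (r + m) with h0 | hpos
    · simp [show r = 0 by omega]
    · refine le_of_mul_le_mul_left ?_ (Nat.cast_pos.mpr hpos)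
      push_cast at hpre ⊢
      nlinarith
  · obtain ⟨m, rfl⟩ := Nat.exists_eq_add_of_le hpr
    obtain ⟨n, rfl⟩ : ∃ n, q = m + n := Nat.exists_eq_add_of_le (by omega)
    have hconc := mul_sum_Ico_le_mul_sum_Ico (i := p) (j := p + m) (k := p + (m + n)) hf
    rw [Nat.add_sub_cancel_left, show p + (m + n) - (p + m) = n by omega] at hconc
    rw [← sum_range_add_sum_Ico _ (Nat.le_add_right p (m + n)),
      ← sum_Ico_consecutive _ (Nat.le_add_right p m) (by omega : p + m ≤ p + (m + n))] at htot
    rw [sum_range_ite_of_le (Nat.le_add_right p m), Nat.add_sub_cancel_left,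
      ← sum_range_add_sum_Ico _ (Nat.le_add_right p m)]
    rcases Nat.eq_zero_or_pos (m + n) with h0 | hpos
    · obtain ⟨rfl, rfl⟩ : m = 0 ∧ n = 0 := by omega
      simpa using hpre
    · refine le_of_mul_le_mul_left ?_ (Nat.cast_pos.mpr hpos)
      push_cast at htot ⊢
      nlinarith

theorem sum_le_sum_range_getD_of_hasSubmultisetSumGE {l : List ℝ} (hl : l.Pairwise (· ≥ ·))
    {k : ℕ} {T : ℝ} (h : HasSubmultisetSumGE l k T) :
    T ≤ ∑ j ∈ Finset.range k, l.getD j 0 := by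
  obtain ⟨u, hu, rfl, hT⟩ := h
  rw [← List.sum_take_eq_sum_range_getD]
  exact hT.trans (hl.sum_le_sum_take hu)

theorem dominance_of_two_blocks {l : List ℝ} (hl : l.Pairwise (· ≥ ·)) {p q N : ℕ}
    (hN : p + q = N) (hlen : l.length = N) {x y : ℝ} (hsum : l.sum = p * x + q * y)
    (hpre : HasSubmultisetSumGE l p (p * x)) (μ ν : Fin N → ℝ)
    (hμ : ∀ i, μ i = l.getD i 0) (hν : ∀ i : Fin N, ν i = if (i : ℕ) < p then x else y) :
    (∑ i, μ i = ∑ i, ν i) ∧ ∀ k : Fin N, 0 ≤ ∑ i ∈ Finset.Iic k, (μ i - ν i) := by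
  subst hN
  have htot : ∑ j ∈ Finset.range (p + q), l.getD j 0 = p * x + q * y := by
    rw [← List.sum_take_eq_sum_range_getD, List.take_of_length_le hlen.le, hsum]
  have hf : AntitoneOn (fun j => l.getD j 0) (Set.Iio (p + q)) := hlen ▸ hl.antitoneOn_getD
  simp only [hμ, hν]
  refine ⟨?_, fun k => ?_⟩
  · rw [Fin.sum_univ_eq_sum_range (fun j => l.getD j 0), htot,
      Fin.sum_univ_eq_sum_range (fun j => if j < p then x else y),
      sum_range_ite_of_le (Nat.le_add_right p q), Nat.add_sub_cancel_left]
  · rw [Fin.sum_Iic_eq_sum_range k (fun j => l.getD j 0 - if j < p then x else y),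
      Finset.sum_sub_distrib, sub_nonneg]
    exact sum_range_ite_le_sum_range hf htot
      (sum_le_sum_range_getD_of_hasSubmultisetSumGE hl hpre) k.isLt

theorem statement5_general (a₁ b₁ a₂ b₂ : ℝ) (d₁ d₂ c : ℕ)
    (hd₁ : 1 ≤ d₁) (hd₂ : 1 ≤ d₂)
    (h₁ : a₁ = a₂ + d₁) (h₂ : a₂ = b₁ + c) (h₃ : b₁ = b₂ + d₂)
    (L : List (ℝ × ℕ))
    (hmult : (L.map (fun s => segMultiset s.1 s.2)).sum
      = segMultiset a₁ (d₁ + c) + segMultiset a₂ (c + d₂))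
    (hchain : L.Chain' (fun s t => segMid t.1 t.2 ≤ segMid s.1 s.2))
    (lamS lam' : Fin (d₁ + c + 1 + (c + d₂ + 1)) → ℝ)
    (hlamS : ∀ i : Fin (d₁ + c + 1 + (c + d₂ + 1)),
      lamS i = (segBlocks L).getD (i : ℕ) 0)
    (hlam' : ∀ i : Fin (d₁ + c + 1 + (c + d₂ + 1)),
      lam' i =
        if (a₂ + b₁) / 2 ≤ (a₁ + b₂) / 2 then
          (if (i : ℕ) < d₁ + c + d₂ + 1 then (a₁ + b₂) / 2 else (a₂ + b₁) / 2)
        else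
          (if (i : ℕ) < c + 1 then (a₂ + b₁) / 2 else (a₁ + b₂) / 2)) :
    (∑ i, lamS i = ∑ i, lam' i) ∧
    ∀ k : Fin (d₁ + c + 1 + (c + d₂ + 1)),
      0 ≤ ∑ i ∈ Finset.Iic k, (lamS i - lam' i) := by
  have hL : segSupport L = segSupport [(a₁, d₁ + c), (a₂, c + d₂)] := by
    simpa [segSupport] using hmult
  have hsorted := pairwise_segBlocks hchain
  have hlen : (segBlocks L).length = d₁ + c + 1 + (c + d₂ + 1) := by
    rw [length_segBlocks, hL]
    simp [segSupport, card_segMultiset]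
  have hsum : (segBlocks L).sum
      = ((d₁ + c + d₂ + 1 : ℕ) : ℝ) * ((a₁ + b₂) / 2) + ((c + 1 : ℕ) : ℝ) * ((a₂ + b₁) / 2) := by
    rw [sum_segBlocks, hL]
    simp only [segSupport, List.map_cons, List.map_nil, List.sum_cons, List.sum_nil, add_zero,
      Multiset.sum_add, sum_segMultiset, segMid_eq]
    subst h₁ h₂ h₃
    push_cast
    ring
  by_cases hcmp : (a₂ + b₁) / 2 ≤ (a₁ + b₂) / 2
  · exact dominance_of_two_blocks hsorted (by omega) hlen hsum
      (hasSubmultisetSumGE_union hd₁ hd₂ h₁ h₂ h₃ hL) lamS lam' hlamS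
      fun i => by simp only [hlam', hcmp, if_true]
  · exact dominance_of_two_blocks (q := d₁ + c + d₂ + 1) (y := (a₁ + b₂) / 2) hsorted (by omega)
      hlen (by rw [hsum, add_comm])
      (hasSubmultisetSumGE_intersection hd₁ hd₂ h₁ h₂ hL) lamS lam' hlamS
      fun i => by simp only [hlam', hcmp, if_false]

/-- Minimality of the Langlands parameter obtained from the union and the
intersection of two linked segments.  The reals satisfy `a₁ = a₂ + d₁`, `a₂ = b₁ + c`,
`b₁ = b₂ + d₂` with `d₁, d₂, c ≥ 1` naturals, encoding `a₁ > a₂ > b₁ > b₂` with pairwise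
integer differences; `N = (d₁+c+1) + (c+d₂+1)`.  `L` is any nonempty list of linear
segments (each recorded as a pair `(α, k)` encoding `(α, …, α-k)`) whose disjoint union of
underlying multisets is that of the two segments `(a₁, …, b₁)`, `(a₂, …, b₂)`, and whose
midpoints are weakly decreasing; `lamS` is the concatenation of its constant blocks.
`lam'` is the parameter of the pair union/intersection, larger value first.
Then `lam' ≤_P lamS`. -/
theorem statement5 (a₁ b₁ a₂ b₂ : ℝ) (d₁ d₂ c : ℕ)
    (hd₁ : 1 ≤ d₁) (hd₂ : 1 ≤ d₂) (hc : 1 ≤ c)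
    (h₁ : a₁ = a₂ + d₁) (h₂ : a₂ = b₁ + c) (h₃ : b₁ = b₂ + d₂)
    (L : List (ℝ × ℕ)) (hL : L ≠ [])
    (hmult : (L.map (fun s => segMultiset s.1 s.2)).sum
      = segMultiset a₁ (d₁ + c) + segMultiset a₂ (c + d₂))
    (hchain : L.Chain' (fun s t => segMid t.1 t.2 ≤ segMid s.1 s.2))
    (lamS lam' : Fin (d₁ + c + 1 + (c + d₂ + 1)) → ℝ)
    (hlamS : ∀ i : Fin (d₁ + c + 1 + (c + d₂ + 1)),
      lamS i = (segBlocks L).getD (i : ℕ) 0)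
    (hlam' : ∀ i : Fin (d₁ + c + 1 + (c + d₂ + 1)),
      lam' i =
        if (a₂ + b₁) / 2 ≤ (a₁ + b₂) / 2 then
          (if (i : ℕ) < d₁ + c + d₂ + 1 then (a₁ + b₂) / 2 else (a₂ + b₁) / 2)
        else
          (if (i : ℕ) < c + 1 then (a₂ + b₁) / 2 else (a₁ + b₂) / 2)) :
    (∑ i, lamS i = ∑ i, lam' i) ∧
    ∀ k : Fin (d₁ + c + 1 + (c + d₂ + 1)),
      0 ≤ ∑ i ∈ Finset.Iic k, (lamS i - lam' i) :=
  statement5_general a₁ b₁ a₂ b₂ d₁ d₂ c hd₁ hd₂ h₁ h₂ h₃ L hmult hchain lamS lam' hlamS hlam'
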